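/- arXiv:1504.04708 — 7 statements merged into one kernel-verified Lean document; each statement's English description precedes it below -/
import Mathlib

section
/- For any Kripke model K, state w, and CTL formula α: K,w ⊨ EF AG EF AG α if and only if K,w ⊨ EF AG α. -/
variable {W : Type*}

/-- An infinite path through the transition relation `R`. -/
def IsPath (R : W → W → Prop) (π : ℕ → W) : Prop := ∀ i, R (π i) (π (i + 1))

/-- `M,w ⊨ EX φ` -/
def SatEX (R : W → W → Prop) (φ : W → Prop) (w : W) : Prop :=
  ∃ π, IsPath R π ∧ π 0 = w ∧ φ (π 1)

/-- `M,w ⊨ AX φ` -/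
def SatAX (R : W → W → Prop) (φ : W → Prop) (w : W) : Prop :=
  ∀ π, IsPath R π → π 0 = w → φ (π 1)

/-- `M,w ⊨ EF φ` -/
def SatEF (R : W → W → Prop) (φ : W → Prop) (w : W) : Prop :=
  ∃ π, IsPath R π ∧ π 0 = w ∧ ∃ k, φ (π k)

/-- `M,w ⊨ AG φ` -/
def SatAG (R : W → W → Prop) (φ : W → Prop) (w : W) : Prop :=
  ∀ π, IsPath R π → π 0 = w → ∀ k, φ (π k)

/-- `M,w ⊨ EG φ` -/
def SatEG (R : W → W → Prop) (φ : W → Prop) (w : W) : Prop :=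
  ∃ π, IsPath R π ∧ π 0 = w ∧ ∀ k, φ (π k)

/-- `M,w ⊨ AF φ` -/
def SatAF (R : W → W → Prop) (φ : W → Prop) (w : W) : Prop :=
  ∀ π, IsPath R π → π 0 = w → ∃ k, φ (π k)

/-- `M,w ⊨ α EU β` -/
def SatEU (R : W → W → Prop) (α β : W → Prop) (w : W) : Prop :=
  ∃ π, IsPath R π ∧ π 0 = w ∧ ∃ k, β (π k) ∧ ∀ i < k, α (π i)

/-- `M,w ⊨ α AU β` -/
def SatAU (R : W → W → Prop) (α β : W → Prop) (w : W) : Prop :=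
  ∀ π, IsPath R π → π 0 = w → ∃ k, β (π k) ∧ ∀ i < k, α (π i)

/-- `M,w ⊨ ψ ER φ` -/
def SatER (R : W → W → Prop) (ψ φ : W → Prop) (w : W) : Prop :=
  ∃ π, IsPath R π ∧ π 0 = w ∧ ∀ k, φ (π k) ∨ ∃ i < k, ψ (π i)

/-- Concatenation of two paths at index `j`. -/
def concatPath (π σ : ℕ → W) (j : ℕ) : ℕ → W :=
  fun i => if i ≤ j then π i else σ (i - j)

lemma concatPath_isPath {R : W → W → Prop} {π σ : ℕ → W} {j : ℕ}
    (hπ : IsPath R π) (hσ : IsPath R σ) (h : π j = σ 0) :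
    IsPath R (concatPath π σ j) := by
  intro i
  unfold concatPath
  rcases lt_trichotomy i j with hij | hij | hij
  · simp only [le_of_lt hij, Nat.succ_le_of_lt hij, if_true]
    exact hπ i
  · subst hij
    simp only [le_refl, if_true, Nat.not_succ_le_self, if_false,
      Nat.succ_sub (le_refl i), Nat.sub_self]
    rw [h]; exact hσ 0
  · have : ¬ i ≤ j := not_le.mpr hij
    have h2 : ¬ i + 1 ≤ j := by omega
    simp only [this, h2, if_false]
    have : i + 1 - j = (i - j) + 1 := by omega
    rw [this]; exact hσ (i - j)

lemma concatPath_add {π σ : ℕ → W} {j : ℕ} (h : π j = σ 0) (k : ℕ) :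
    concatPath π σ j (j + k) = σ k := by
  unfold concatPath
  rcases Nat.eq_zero_or_pos k with rfl | hk
  · simpa using h
  · have : ¬ j + k ≤ j := by omega
    simp [this, Nat.add_sub_cancel_left]

lemma exists_path {R : W → W → Prop} (hR : ∀ w, ∃ v, R w v) (w : W) :
    ∃ π, IsPath R π ∧ π 0 = w := by
  choose f hf using hR
  refine ⟨fun n => f^[n] w, fun i => ?_, rfl⟩
  simp only [Function.iterate_succ_apply']
  exact hf _

lemma satAG_reach {R : W → W → Prop} {α : W → Prop} {v : W}
    (h : SatAG R α v) {ρ : ℕ → W} (hρ : IsPath R ρ) (hρ0 : ρ 0 = v) (j : ℕ) :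
    SatAG R α (ρ j) := by
  intro τ hτ hτ0 k
  have hcon := concatPath_isPath hρ hτ (by rw [hτ0])
  have := h _ hcon (by simp [concatPath, hρ0]) (j + k)
  rwa [concatPath_add (by rw [hτ0])] at this

theorem stmt7 (R : W → W → Prop) (hR : ∀ w, ∃ v, R w v) (w : W) (α : W → Prop) :
    SatEF R (SatAG R (SatEF R (SatAG R α))) w ↔ SatEF R (SatAG R α) w := by
  constructor
  · rintro ⟨π, hπ, hπ0, k, hk⟩
    obtain ⟨ρ, hρ, hρ0⟩ := exists_path hR (π k)
    have hEF : SatEF R (SatAG R α) (π k) := by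
      have := hk ρ hρ hρ0 0
      rwa [hρ0] at this
    obtain ⟨σ, hσ, hσ0, m, hm⟩ := hEF
    refine ⟨concatPath π σ k, concatPath_isPath hπ hσ (by rw [hσ0]), ?_, k + m, ?_⟩
    · simp [concatPath, hπ0]
    · rw [concatPath_add (by rw [hσ0])]; exact hm
  · rintro ⟨π, hπ, hπ0, k, hk⟩
    refine ⟨π, hπ, hπ0, k, ?_⟩
    intro ρ hρ hρ0 j
    obtain ⟨τ, hτ, hτ0⟩ := exists_path hR (ρ j)
    exact ⟨τ, hτ, hτ0, 0, by rw [hτ0]; exact satAG_reach hk hρ hρ0 j⟩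
end

section
/- For any Kripke model K, state w, and CTL formula α: K,w ⊨ AF EG AF α if and only if K,w ⊨ EG AF α. -/
variable {W : Type*}

private lemma shiftPath {R : W → W → Prop} {π : ℕ → W} (h : IsPath R π) (j : ℕ) :
    IsPath R (fun n => π (n + j)) := fun i => by
  simpa [Nat.add_right_comm] using h (i + j)

private lemma af_of_afφ {R : W → W → Prop} {α : W → Prop} {s : W}
    (h : SatAF R (SatEG R (SatAF R α)) s) : SatAF R α s := by
  intro ρ hρ h0
  obtain ⟨j, τ, hτ, hτ0, hall⟩ := h ρ hρ h0
  have h1 := hall 0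
  rw [hτ0] at h1
  obtain ⟨m, hm⟩ := h1 (fun n => ρ (n + j)) (shiftPath hρ j) (by simp)
  exact ⟨m + j, hm⟩

private lemma step_lemma {R : W → W → Prop} (hR : ∀ w, ∃ v, R w v) {α : W → Prop} {s : W}
    (h : SatAF R (SatEG R (SatAF R α)) s) :
    ∃ t, R s t ∧ SatAF R (SatEG R (SatAF R α)) t := by
  by_cases hφ : SatEG R (SatAF R α) s
  · obtain ⟨τ, hτ, hτ0, hall⟩ := hφ
    refine ⟨τ 1, hτ0 ▸ hτ 0, ?_⟩
    intro ρ hρ h0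
    exact ⟨0, fun n => τ (n + 1), shiftPath hτ 1, h0.symm, fun k => hall (k + 1)⟩
  · obtain ⟨t, ht⟩ := hR s
    refine ⟨t, ht, ?_⟩
    intro ρ hρ h0
    set σ : ℕ → W := fun n => Nat.rec s (fun k _ => ρ k) n with hσdef
    have hσ : IsPath R σ := by
      intro i
      cases i with
      | zero => simpa [σ, h0] using ht
      | succ n => exact hρ n
    obtain ⟨k, hk⟩ := h σ hσ rfl
    cases k with
    | zero => exact absurd hk hφ
    | succ n => exact ⟨n, hk⟩

theorem stmt10 (R : W → W → Prop) (hR : ∀ w, ∃ v, R w v) (w : W) (α : W → Prop) :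
    SatAF R (SatEG R (SatAF R α)) w ↔ SatEG R (SatAF R α) w := by
  constructor
  · intro h
    classical
    set g : W → W := fun s =>
      if hs : SatAF R (SatEG R (SatAF R α)) s then (step_lemma hR hs).choose
      else (hR s).choose with hgdef
    have gspec : ∀ s, SatAF R (SatEG R (SatAF R α)) s →
        R s (g s) ∧ SatAF R (SatEG R (SatAF R α)) (g s) := by
      intro s hs
      simp only [hgdef, dif_pos hs]
      exact ⟨(step_lemma hR hs).choose_spec.1, (step_lemma hR hs).choose_spec.2⟩
    set π : ℕ → W := fun n => g^[n] w with hπdef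
    have key : ∀ n, SatAF R (SatEG R (SatAF R α)) (π n) ∧ R (π n) (π (n + 1)) := by
      intro n
      induction n with
      | zero =>
        refine ⟨h, ?_⟩
        simpa [hπdef, Function.iterate_succ_apply'] using (gspec w h).1
      | succ n ih =>
        have h1 : π (n + 1) = g (π n) := by
          simp [hπdef, Function.iterate_succ_apply']
        have h2 := gspec (π n) ih.1
        refine ⟨h1 ▸ h2.2, ?_⟩
        have h3 : π (n + 2) = g (π (n + 1)) := by
          simp [hπdef, Function.iterate_succ_apply']
        have h4 := gspec (π (n + 1)) (h1 ▸ h2.2)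
        exact h3 ▸ h4.1
    exact ⟨π, fun i => (key i).2, rfl, fun k => af_of_afφ (key k).1⟩
  · intro h ρ hρ h0
    exact ⟨0, h0 ▸ h⟩
end

section
/- For any Kripke model K, state w, and CTL formulas α, β: K,w ⊨ EG(α ∧ EG β) if and only if K,w ⊨ EG(α ∧ β). -/
variable {W : Type*}

theorem stmt11 (R : W → W → Prop) (hR : ∀ w, ∃ v, R w v) (w : W) (α β : W → Prop) :
    SatEG R (fun v => α v ∧ SatEG R β v) w ↔ SatEG R (fun v => α v ∧ β v) w := by
  constructor
  · rintro ⟨π, hπ, h0, h⟩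
    refine ⟨π, hπ, h0, fun k => ⟨(h k).1, ?_⟩⟩
    obtain ⟨σ, hσ, hσ0, hβ⟩ := (h k).2
    have := hβ 0; rwa [hσ0] at this
  · rintro ⟨π, hπ, h0, h⟩
    refine ⟨π, hπ, h0, fun k => ⟨(h k).1, fun i => π (k + i), fun i => hπ _, rfl, fun i => (h (k + i)).2⟩⟩
end

section
/- Let π be an infinite path through a Kripke model K and let φ = α₁ ER (α₂ ER (⋯ ER (α_m ER β)⋯)) be a right-nested ER formula. Then (∀i≥1: K,π[i] ⊨ β) if and only if (∀i≥1: K,π[i] ⊨ φ). -/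
variable {W : Type*}

theorem stmt15 (R : W → W → Prop) (hR : ∀ w, ∃ v, R w v) (π : ℕ → W) (hπ : IsPath R π)
    (αs : List (W → Prop)) (β : W → Prop) :
    (∀ i, β (π i)) ↔ (∀ i, (αs.foldr (SatER R) β) (π i)) := by
  constructor
  · intro hβ
    induction αs with
    | nil => exact hβ
    | cons α rest ih =>
      intro i
      refine ⟨fun j => π (i + j), fun j => hπ (i + j), by simp, fun k => Or.inl (ih _)⟩
  · intro hf i
    have key : ∀ (γs : List (W → Prop)) (w : W), (γs.foldr (SatER R) β) w → β w := by
      intro γs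
      induction γs with
      | nil => exact fun _ h => h
      | cons α rest ih =>
        intro w ⟨ρ, _, hρ0, hρ⟩
        rcases hρ 0 with h | ⟨j, hj, _⟩
        · exact ih w (hρ0 ▸ h)
        · omega
    exact key αs (π i) (hf i)
end

section
/- Let π be an infinite path through a Kripke model K, k a positive integer, and φ = α₁ ER (α₂ ER (⋯ ER (α_m ER β)⋯)) a right-nested ER formula. Then (∀i≤k: K,π[i] ⊨ φ) if and only if (K,π[k] ⊨ φ and ∀i≤k: K,π[i] ⊨ β). -/
variable {W : Type*}

lemma foldr_imp_beta (R : W → W → Prop) (αs : List (W → Prop)) (β : W → Prop) (w : W)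
    (h : (αs.foldr (SatER R) β) w) : β w := by
  induction αs generalizing w with
  | nil => exact h
  | cons α rest ih =>
    obtain ⟨ρ, _, h0, hc⟩ := h
    rcases hc 0 with h' | ⟨i, hi, _⟩
    · exact ih _ (h0 ▸ h')
    · omega

lemma foldr_backstep (R : W → W → Prop) (αs : List (W → Prop)) (β : W → Prop) (w v : W)
    (hβ : β w) (hwv : R w v) (h : (αs.foldr (SatER R) β) v) : (αs.foldr (SatER R) β) w := by
  induction αs generalizing w v with
  | nil => exact hβ
  | cons α rest ih =>
    obtain ⟨ρ, hρ, h0, hc⟩ := h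
    have hFv : (rest.foldr (SatER R) β) v := by
      rcases hc 0 with h' | ⟨i, hi, _⟩
      · exact h0 ▸ h'
      · omega
    have hFw := ih w v hβ hwv hFv
    refine ⟨fun n => if n = 0 then w else ρ (n - 1), ?_, by simp, ?_⟩
    · intro i
      cases i with
      | zero => simpa [h0] using hwv
      | succ n => simpa using hρ n
    · intro n
      cases n with
      | zero => exact Or.inl (by simpa using hFw)
      | succ m =>
        rcases hc m with h' | ⟨i, hi, hα⟩
        · exact Or.inl (by simpa using h')
        · exact Or.inr ⟨i + 1, by omega, by simpa using hα⟩

theorem stmt16 (R : W → W → Prop) (hR : ∀ w, ∃ v, R w v) (π : ℕ → W) (hπ : IsPath R π)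
    (k : ℕ) (hk : 1 ≤ k) (αs : List (W → Prop)) (β : W → Prop) :
    (∀ i < k, (αs.foldr (SatER R) β) (π i)) ↔
      ((αs.foldr (SatER R) β) (π (k - 1)) ∧ ∀ i < k, β (π i)) := by
  constructor
  · intro h
    exact ⟨h (k - 1) (by omega), fun i hi => foldr_imp_beta R αs β _ (h i hi)⟩
  · rintro ⟨hφ, hβ⟩
    -- descending induction: φ holds at all i ≤ k-1
    have key : ∀ d i, i + d = k - 1 → (αs.foldr (SatER R) β) (π i) := by
      intro d
      induction d with
      | zero => intro i hi; rw [show i = k - 1 by omega]; exact hφ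
      | succ m ihm =>
        intro i hi
        have h1 : (αs.foldr (SatER R) β) (π (i + 1)) := ihm (i + 1) (by omega)
        exact foldr_backstep R αs β _ _ (hβ i (by omega)) (hπ i) h1
    intro i hi
    exact key (k - 1 - i) i (by omega)
end

section
/- Let K = (W,R,ξ) be a Kripke model, φ an {ER}-formula with atomic right form ⟨α₁,…,α_m,β⟩ with m ≥ 1 (β an atom), and w ∈ W. Then K,w ⊨ φ if and only if there exists a finite R-path π starting at w of length |π| ≤ |W|+1 such that (1) K,π[i] ⊨ β for all i ≤ |π|, and (2) either |π| = |W|+1, or both K,π[|π|] ⊨ α₁ and K,π[|π|] ⊨ α₂ ER (α₃ ER (⋯ ER (α_m ER β)⋯)). -/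
variable {W : Type*}

/-- `foldr SatER β` implies `β`. -/
lemma foldr_imp_beta_s17 (R : W → W → Prop) (β : W → Prop) :
    ∀ (l : List (W → Prop)) (v : W), l.foldr (SatER R) β v → β v
  | [], _, h => h
  | a :: l, v, h => by
      obtain ⟨π, _, h0, hk⟩ := h
      rcases hk 0 with h | ⟨i, hi, _⟩
      · exact foldr_imp_beta_s17 R β l v (h0 ▸ h)
      · omega

/-- An infinite path along which β always holds gives `foldr SatER β` at its start. -/
lemma foldr_of_infinite_beta_path (R : W → W → Prop) (β : W → Prop) :
    ∀ (l : List (W → Prop)) (π : ℕ → W), IsPath R π → (∀ k, β (π k)) →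
      l.foldr (SatER R) β (π 0)
  | [], π, _, hβ => hβ 0
  | a :: l, π, hp, hβ => by
      refine ⟨π, hp, rfl, fun k => Or.inl ?_⟩
      have := foldr_of_infinite_beta_path R β l (fun t => π (k + t))
        (fun i => by simpa [Nat.add_assoc] using hp (k + i))
        (fun t => hβ (k + t))
      simpa using this

/-- `foldr SatER β` propagates backwards along a finite β-path. -/
lemma foldr_backprop (R : W → W → Prop) (β : W → Prop) :
    ∀ (l : List (W → Prop)) (t : ℕ) (σ : ℕ → W),
      (∀ i, i + 1 ≤ t → R (σ i) (σ (i + 1))) → (∀ i ≤ t, β (σ i)) →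
      l.foldr (SatER R) β (σ t) → l.foldr (SatER R) β (σ 0)
  | [], t, σ, _, hβ, _ => hβ 0 (Nat.zero_le t)
  | a :: l, t, σ, hedge, hβ, h => by
      obtain ⟨ρ, hρ, hρ0, hk⟩ := h
      have hχ' : l.foldr (SatER R) β (σ t) := by
        rcases hk 0 with h' | ⟨i, hi, _⟩
        · rwa [hρ0] at h'
        · omega
      refine ⟨fun k => if k < t then σ k else ρ (k - t), ?_, ?_, ?_⟩
      · intro k
        rcases Nat.lt_trichotomy (k + 1) t with h1 | h1 | h1
        · simp only [if_pos (by omega : k < t), if_pos h1]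
          exact hedge k (by omega)
        · simp only [if_pos (by omega : k < t), if_neg (by omega : ¬ k + 1 < t)]
          have : k + 1 - t = 0 := by omega
          rw [this, hρ0, ← h1]
          exact hedge k (by omega)
        · simp only [if_neg (by omega : ¬ k < t), if_neg (by omega : ¬ k + 1 < t)]
          have : k + 1 - t = (k - t) + 1 := by omega
          rw [this]
          exact hρ (k - t)
      · by_cases h0 : 0 < t
        · simp [h0]
        · simp only [if_neg h0]
          have : t = 0 := by omega
          rw [this] at hρ0 ⊢
          simpa using hρ0
      · intro k
        rcases Nat.lt_or_ge k t with hkt | hkt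
        · refine Or.inl ?_
          simp only [if_pos hkt]
          have := foldr_backprop R β l (t - k) (fun j => σ (k + j))
            (fun i hi => hedge (k + i) (by omega))
            (fun i hi => hβ (k + i) (by omega))
            (by
              show l.foldr (SatER R) β (σ (k + (t - k)))
              have : k + (t - k) = t := by omega
              rw [this]; exact hχ')
          simpa using this
        · rcases hk (k - t) with h' | ⟨i, hi, hai⟩
          · exact Or.inl (by simpa [if_neg (by omega : ¬ k < t)] using h')
          · refine Or.inr ⟨i + t, by omega, ?_⟩
            simpa [if_neg (by omega : ¬ i + t < t), Nat.add_sub_cancel] using hai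
termination_by l => l.length

/-- From any state there is an infinite path (by totality of R). -/
lemma exists_inf_path (R : W → W → Prop) (hR : ∀ w, ∃ v, R w v) (v : W) :
    ∃ ρ, IsPath R ρ ∧ ρ 0 = v := by
  choose f hf using hR
  refine ⟨fun k => f^[k] v, fun i => ?_, rfl⟩
  show R (f^[i] v) (f^[i+1] v)
  rw [Function.iterate_succ_apply']
  exact hf _

/-- Pigeonhole: a sequence longer than the card of W repeats. -/
lemma exists_repeat [Fintype W] (π : ℕ → W) (n : ℕ) (hn : Fintype.card W < n) :
    ∃ i j, i < j ∧ j < n ∧ π i = π j := by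
  have := Fintype.exists_ne_map_eq_of_card_lt (fun x : Fin n => π x) (by simpa using hn)
  obtain ⟨x, y, hxy, he⟩ := this
  rcases Nat.lt_trichotomy x.1 y.1 with h | h | h
  · exact ⟨x, y, h, y.2, he⟩
  · exact absurd (Fin.ext h) hxy
  · exact ⟨y, x, h, x.2, he.symm⟩

/-- A finite path with a property at the end can be shortened to length ≤ |W| + 1. -/
lemma shorten [Fintype W] (R : W → W → Prop) (β P : W → Prop) (w : W) :
    ∀ n, 1 ≤ n →
      (∃ π : ℕ → W, π 0 = w ∧ (∀ i, i + 1 < n → R (π i) (π (i + 1))) ∧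
        (∀ i < n, β (π i)) ∧ P (π (n - 1))) →
      ∃ m, 1 ≤ m ∧ m ≤ Fintype.card W + 1 ∧
        ∃ π : ℕ → W, π 0 = w ∧ (∀ i, i + 1 < m → R (π i) (π (i + 1))) ∧
          (∀ i < m, β (π i)) ∧ P (π (m - 1)) := by
  intro n
  induction n using Nat.strong_induction_on with
  | _ n IH =>
    intro h1 hex
    obtain ⟨π, h0, hedge, hβ, hP⟩ := hex
    by_cases hle : n ≤ Fintype.card W + 1
    · exact ⟨n, h1, hle, π, h0, hedge, hβ, hP⟩
    · obtain ⟨i, j, hij, hjn, heq⟩ := exists_repeat π n (by omega)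
      set d := j - i with hd
      set m := n - d with hm
      have hd1 : 1 ≤ d := by omega
      have hidj : i + d = j := by omega
      refine IH m (by omega) (by omega) ⟨fun k => if k < i then π k else π (k + d), ?_, ?_, ?_, ?_⟩
      · by_cases h0i : 0 < i
        · simp [h0i, h0]
        · have hi0 : i = 0 := by omega
          simp only [if_neg (by omega : ¬ (0:ℕ) < i), Nat.zero_add]
          have : d = j := by omega
          rw [this, ← heq, hi0, h0]
      · intro k hk
        rcases Nat.lt_trichotomy (k + 1) i with h1' | h1' | h1'
        · simp only [if_pos (by omega : k < i), if_pos h1']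
          exact hedge k (by omega)
        · simp only [if_pos (by omega : k < i), if_neg (by omega : ¬ k + 1 < i)]
          rw [show k + 1 + d = j from by omega, ← heq, ← h1']
          exact hedge k (by omega)
        · simp only [if_neg (by omega : ¬ k < i), if_neg (by omega : ¬ k + 1 < i)]
          rw [show k + 1 + d = (k + d) + 1 from by omega]
          exact hedge (k + d) (by omega)
      · intro t ht
        by_cases hti : t < i
        · simpa [hti] using hβ t (by omega)
        · simpa [hti] using hβ (t + d) (by omega)
      · have hmi : ¬ (m - 1 < i) := by omega
        simp only [if_neg hmi]
        rw [show m - 1 + d = n - 1 from by omega]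
        exact hP

/-- From a finite β-path longer than |W|, build an infinite β-path (a lasso). -/
lemma lasso (R : W → W → Prop) (β : W → Prop) (π : ℕ → W) (n : ℕ)
    (hedge : ∀ t, t + 1 < n → R (π t) (π (t + 1)))
    (hβ : ∀ t < n, β (π t)) (i j : ℕ) (hij : i < j) (hjn : j < n) (heq : π i = π j) :
    ∃ ρ, IsPath R ρ ∧ ρ 0 = π 0 ∧ ∀ k, β (ρ k) := by
  set d := j - i with hd
  have hd1 : 1 ≤ d := by omega
  have hidj : i + d = j := by omega
  refine ⟨fun k => if k < i then π k else π (i + (k - i) % d), ?_, ?_, ?_⟩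
  · intro k
    rcases Nat.lt_trichotomy (k + 1) i with h1' | h1' | h1'
    · simp only [if_pos (by omega : k < i), if_pos h1']
      exact hedge k (by omega)
    · simp only [if_pos (by omega : k < i), if_neg (by omega : ¬ k + 1 < i)]
      rw [show k + 1 - i = 0 from by omega]
      simp only [Nat.zero_mod, Nat.add_zero]
      rw [show i = k + 1 from by omega] at heq ⊢
      exact hedge k (by omega)
    · have hki : ¬ k < i := by omega
      simp only [if_neg hki, if_neg (by omega : ¬ k + 1 < i)]
      set r := (k - i) % d with hr
      have hrd : r < d := Nat.mod_lt _ (by omega)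
      have key : (k + 1 - i) % d = (r + 1) % d := by
        rw [show k + 1 - i = (k - i) + 1 from by omega]
        conv_rhs => rw [Nat.add_mod, Nat.mod_eq_of_lt hrd]
        rw [Nat.add_mod, hr]
      rw [key]
      by_cases hcase : r + 1 < d
      · rw [Nat.mod_eq_of_lt hcase, show i + (r + 1) = (i + r) + 1 from by omega]
        exact hedge (i + r) (by omega)
      · have : (r + 1) % d = 0 := by
          rw [show r + 1 = d from by omega]
          exact Nat.mod_self d
        rw [this, Nat.add_zero, heq, show j = (i + r) + 1 from by omega]
        exact hedge (i + r) (by omega)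
  · by_cases h0i : 0 < i
    · simp [h0i]
    · have hi0 : i = 0 := by omega
      simp [hi0]
  · intro k
    by_cases hki : k < i
    · simpa [hki] using hβ k (by omega)
    · have hrd : (k - i) % d < d := Nat.mod_lt _ (by omega)
      simpa [hki] using hβ (i + (k - i) % d) (by omega)

theorem stmt17 [Fintype W] (R : W → W → Prop) (hR : ∀ w, ∃ v, R w v) (w : W)
    (α₁ : W → Prop) (αs : List (W → Prop)) (β : W → Prop) :
    SatER R α₁ (αs.foldr (SatER R) β) w ↔
      ∃ n, ∃ π : ℕ → W, 1 ≤ n ∧ n ≤ Fintype.card W + 1 ∧ π 0 = w ∧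
        (∀ i, i + 1 < n → R (π i) (π (i + 1))) ∧
        (∀ i < n, β (π i)) ∧
        (n = Fintype.card W + 1 ∨
          (α₁ (π (n - 1)) ∧ (αs.foldr (SatER R) β) (π (n - 1)))) := by
  set χ : W → Prop := αs.foldr (SatER R) β with hχdef
  constructor
  · rintro ⟨π, hπ, h0, hk⟩
    by_cases hA : ∃ i, α₁ (π i)
    · -- α₁ holds somewhere: take first occurrence, then shorten
      classical
      set k₀ := Nat.find hA with hk₀
      have hα : α₁ (π k₀) := Nat.find_spec hA
      have hmin : ∀ i < k₀, ¬ α₁ (π i) := fun i hi => Nat.find_min hA hi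
      have hχk : ∀ k ≤ k₀, χ (π k) := by
        intro k hkk
        rcases hk k with h | ⟨i, hi, hαi⟩
        · exact h
        · exact absurd hαi (hmin i (by omega))
      have hQ : ∃ π' : ℕ → W, π' 0 = w ∧ (∀ i, i + 1 < k₀ + 1 → R (π' i) (π' (i + 1))) ∧
          (∀ i < k₀ + 1, β (π' i)) ∧ (fun v => α₁ v ∧ χ v) (π' (k₀ + 1 - 1)) := by
        refine ⟨π, h0, fun i _ => hπ i, fun i hi => foldr_imp_beta_s17 R β αs _ (hχk i (by omega)), ?_⟩
        simpa using ⟨hα, hχk k₀ le_rfl⟩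
      obtain ⟨m, hm1, hm2, π', h0', hedge', hβ', hP'⟩ :=
        shorten R β (fun v => α₁ v ∧ χ v) w (k₀ + 1) (by omega) hQ
      exact ⟨m, π', hm1, hm2, h0', hedge', hβ', Or.inr hP'⟩
    · -- α₁ never holds: χ, hence β, holds everywhere along π
      have hχk : ∀ k, χ (π k) := by
        intro k
        rcases hk k with h | ⟨i, _, hαi⟩
        · exact h
        · exact absurd ⟨i, hαi⟩ hA
      exact ⟨Fintype.card W + 1, π, by omega, le_rfl, h0, fun i _ => hπ i,
        fun i _ => foldr_imp_beta_s17 R β αs _ (hχk i), Or.inl rfl⟩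
  · rintro ⟨n, π, h1, h2, h0, hedge, hβ, hlast⟩
    rcases hlast with hcard | ⟨hα, hχlast⟩
    · -- n = |W| + 1: pigeonhole, lasso, β forever
      obtain ⟨i, j, hij, hjn, heq⟩ := exists_repeat π n (by omega)
      obtain ⟨ρ, hρ, hρ0, hρβ⟩ := lasso R β π n hedge hβ i j hij hjn heq
      refine ⟨ρ, hρ, by rw [hρ0, h0], fun k => Or.inl ?_⟩
      have := foldr_of_infinite_beta_path R β αs (fun t => ρ (k + t))
        (fun t => by simpa [Nat.add_assoc] using hρ (k + t))
        (fun t => hρβ (k + t))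
      simpa using this
    · -- path ends in a state satisfying α₁ and χ
      set t := n - 1 with ht
      obtain ⟨ρ, hρ, hρ0⟩ := exists_inf_path R hR (π t)
      refine ⟨fun k => if k < t then π k else ρ (k - t), ?_, ?_, ?_⟩
      · intro k
        rcases Nat.lt_trichotomy (k + 1) t with h1' | h1' | h1'
        · simp only [if_pos (by omega : k < t), if_pos h1']
          exact hedge k (by omega)
        · simp only [if_pos (by omega : k < t), if_neg (by omega : ¬ k + 1 < t)]
          rw [show k + 1 - t = 0 from by omega, hρ0, ← h1']
          exact hedge k (by omega)
        · simp only [if_neg (by omega : ¬ k < t), if_neg (by omega : ¬ k + 1 < t)]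
          rw [show k + 1 - t = (k - t) + 1 from by omega]
          exact hρ (k - t)
      · by_cases h0t : 0 < t
        · simp [h0t, h0]
        · have : t = 0 := by omega
          simp only [if_neg h0t]
          rw [Nat.zero_sub, hρ0, this, h0]
      · intro k
        rcases Nat.lt_trichotomy k t with hkt | hkt | hkt
        · refine Or.inl ?_
          simp only [if_pos hkt]
          have := foldr_backprop R β αs (t - k) (fun j => π (k + j))
            (fun i hi => hedge (k + i) (by omega))
            (fun i hi => hβ (k + i) (by omega))
            (by
              show χ (π (k + (t - k)))
              rw [show k + (t - k) = t from by omega]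
              exact hχlast)
          simpa using this
        · refine Or.inl ?_
          simp only [if_neg (by omega : ¬ k < t)]
          rw [show k - t = 0 from by omega, hρ0]
          exact hχlast
        · refine Or.inr ⟨t, by omega, ?_⟩
          simp only [if_neg (by omega : ¬ t < t)]
          rw [Nat.sub_self, hρ0]
          exact hα
end

section
/- Let K = (W,R,ξ) be a Kripke model, s a state, α a disjunction of atoms, and β₁,…,β_k arbitrary CTL formulas. Then K,s ⊨ EG(α ∨ EG β₁ ∨ ⋯ ∨ EG β_k) if and only if either (1) there is a finite R-path v₁,…,v_m starting at s of length m = |W|+1 with K,v_i ⊨ α for all i ≤ m, or (2) there is a finite R-path v₁,…,v_m starting at s with 1 ≤ m ≤ |W|+1 such that K,v_i ⊨ α for all i ≤ m−1 and K,v_m ⊨ EG β_q for some q. -/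
variable {W : Type*}

/-- Index function for the lasso path: counts `0,1,…,b-1,a,a+1,…,b-1,a,…`. -/
def lassoIdx (a b : ℕ) : ℕ → ℕ
  | 0 => 0
  | i + 1 => if lassoIdx a b i + 1 = b then a else lassoIdx a b i + 1

theorem lassoIdx_lt (a b : ℕ) (hab : a < b) : ∀ i, lassoIdx a b i < b := by
  intro i
  induction i with
  | zero => exact Nat.lt_of_le_of_lt (Nat.zero_le a) hab
  | succ i ih =>
    simp only [lassoIdx]
    split
    · exact hab
    · omega

theorem stmt19 [Fintype W] (R : W → W → Prop) (hR : ∀ w, ∃ v, R w v) (s : W)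
    (α : W → Prop) (βs : List (W → Prop)) :
    SatEG R (fun v => α v ∨ ∃ β ∈ βs, SatEG R β v) s ↔
      ((∃ v : ℕ → W, v 0 = s ∧
          (∀ i, i + 1 < Fintype.card W + 1 → R (v i) (v (i + 1))) ∧
          (∀ i < Fintype.card W + 1, α (v i))) ∨
       (∃ m, ∃ v : ℕ → W, 1 ≤ m ∧ m ≤ Fintype.card W + 1 ∧ v 0 = s ∧
          (∀ i, i + 1 < m → R (v i) (v (i + 1))) ∧
          (∀ i, i + 1 < m → α (v i)) ∧
          ∃ β ∈ βs, SatEG R β (v (m - 1)))) := by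
  classical
  constructor
  · rintro ⟨π, hπ, hπ0, hsat⟩
    by_cases h : ∀ i ≤ Fintype.card W, α (π i)
    · exact Or.inl ⟨π, hπ0, fun i _ => hπ i, fun i hi => h i (by omega)⟩
    · right
      push_neg at h
      obtain ⟨j, hjle, hjα⟩ := h
      have hex : ∃ i, ¬ α (π i) := ⟨j, hjα⟩
      have hfle : Nat.find hex ≤ j := Nat.find_min' hex hjα
      refine ⟨Nat.find hex + 1, π, by omega, by omega, hπ0, fun i _ => hπ i,
        fun i hi => ?_, ?_⟩
      · by_contra hc
        exact absurd (Nat.find_min hex (show i < Nat.find hex by omega)) (not_not_intro hc)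
      · have := (hsat (Nat.find hex)).resolve_left (Nat.find_spec hex)
        simpa using this
  · rintro (⟨v, hv0, hRv, hαv⟩ | ⟨m, v, hm1, hm2, hv0, hpath, hα, β, hβ, ρ, hρ, hρ0, hρβ⟩)
    · -- pigeonhole: find a repeated state
      obtain ⟨a0, b0, hne, heq0⟩ :=
        Fintype.exists_ne_map_eq_of_card_lt (fun i : Fin (Fintype.card W + 1) => v i)
          (by simp)
      obtain ⟨a, b, hab, hble, heq⟩ :
          ∃ a b : ℕ, a < b ∧ b ≤ Fintype.card W ∧ v a = v b := by
        rcases lt_or_gt_of_ne hne with hlt | hgt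
        · exact ⟨a0, b0, hlt, by omega, heq0⟩
        · exact ⟨b0, a0, hgt, by omega, heq0.symm⟩
      refine ⟨fun i => v (lassoIdx a b i), ?_, hv0, fun k => Or.inl ?_⟩
      · intro i
        have hi := lassoIdx_lt a b hab i
        show R (v (lassoIdx a b i)) (v (lassoIdx a b (i + 1)))
        simp only [lassoIdx]
        split
        · rename_i hb
          have h5 := hRv (lassoIdx a b i) (by omega)
          rwa [hb, ← heq] at h5
        · exact hRv (lassoIdx a b i) (by omega)
      · exact hαv _ (by have := lassoIdx_lt a b hab k; omega)
    · -- extend finite prefix by the EG-β path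
      refine ⟨fun i => if i < m - 1 then v i else ρ (i - (m - 1)), ?_, ?_, ?_⟩
      · intro i
        by_cases h1 : i + 1 < m - 1
        · have h2 : i < m - 1 := by omega
          simp only [if_pos h1, if_pos h2]
          exact hpath i (by omega)
        · by_cases h2 : i < m - 1
          · have h3 : i + 1 - (m - 1) = 0 := by omega
            simp only [if_pos h2, if_neg h1]
            rw [h3, hρ0]
            have h4 : m - 1 = i + 1 := by omega
            rw [h4]
            exact hpath i (by omega)
          · have h3 : ¬ (i + 1 < m - 1) := by omega
            simp only [if_neg h3, if_neg h2]
            have h4 : i + 1 - (m - 1) = (i - (m - 1)) + 1 := by omega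
            rw [h4]
            exact hρ _
      · by_cases h : 0 < m - 1
        · simpa [h] using hv0
        · have hm : m = 1 := by omega
          simp only [if_neg h]
          have h0 : (0 : ℕ) - (m - 1) = 0 := by omega
          rw [h0, hρ0, hm]
          exact hv0
      · intro k
        by_cases h : k < m - 1
        · exact Or.inl (by simpa [h] using hα k (by omega))
        · exact Or.inr ⟨β, hβ, fun t => ρ (k - (m - 1) + t), fun t => hρ _, by simp [h],
            fun t => hρβ _⟩
end
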